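/- arXiv:2306.00725 — 9 statements merged into one kernel-verified Lean document; each statement's English description precedes it below -/
import Mathlib

section
/- Let C be a finite set of cells, τ a partition on C, and L a set of partitions on C, each finer than τ, containing the trivial partition ⊥ and closed under the partition join. For B finer than τ let cir_L(B) denote the greatest element of {P ∈ L : P ≤ B}. Fix A ∈ L and set L/A := {P/A : P ∈ L, A ≤ P}, a set of partitions on C/A (which contains the trivial partition on C/A and is closed under join), with cir_{L/A} defined analogously on partitions of C/A finer than τ/A. Then for every partition B with A ≤ B ≤ τ, cir_{L/A}(B/A) = cir_L(B)/A. -/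
/-- The quotient partition `B/A` on the quotient set `C/A` (for partitions `A ≤ B` on `C`),
viewed as an equivalence relation on `Quotient A`: two colors of `A` are identified iff
(any of) their representatives are `B`-related. -/
noncomputable def quotPartition {C : Type*} (A B : Setoid C) : Setoid (Quotient A) :=
  Setoid.comap (Quotient.out : Quotient A → C) B

/-
Passing to the quotient by `A` is an order embedding of the partitions coarser than `A`.
Hence the candidate `cir_L(B)/A` lies in the set defining `cir_{L/A}(B/A)`, and conversely
every `P/A` in that set comes from some `P ∈ L` with `A ≤ P ≤ B`, so `P ≤ cir_L(B)`.
-/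

section QuotPartition

variable {C : Type*} {A P Q : Setoid C}

theorem quotPartition_mono (A : Setoid C) : Monotone (quotPartition A) :=
  fun _ _ hPQ _ _ h => hPQ h

theorem quotPartition_rel_mk_iff (hAP : A ≤ P) (x y : C) :
    (quotPartition A P).r (Quotient.mk A x) (Quotient.mk A y) ↔ P.r x y := by
  have hx : P.r (Quotient.mk A x).out x := hAP (Quotient.mk_out x)
  have hy : P.r (Quotient.mk A y).out y := hAP (Quotient.mk_out y)
  exact ⟨fun h => P.trans (P.symm hx) (P.trans h hy),
    fun h => P.trans hx (P.trans h (P.symm hy))⟩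

theorem quotPartition_le_quotPartition_iff (hAP : A ≤ P) (hAQ : A ≤ Q) :
    quotPartition A P ≤ quotPartition A Q ↔ P ≤ Q := by
  refine ⟨fun h x y hxy => ?_, fun h => quotPartition_mono A h⟩
  rw [← quotPartition_rel_mk_iff hAQ]
  exact h ((quotPartition_rel_mk_iff hAP x y).2 hxy)

end QuotPartition

theorem cir_quotient_eq_quotient_cir_general {C : Type*}
    (L : Set (Setoid C))
    (A : Setoid C) (hA : A ∈ L)
    (B : Setoid C) (hAB : A ≤ B)
    (cB : Setoid C) (hcB : IsGreatest {P | P ∈ L ∧ P ≤ B} cB)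
    (cQ : Setoid (Quotient A))
    (hcQ : IsGreatest
      {P | P ∈ (fun S => quotPartition A S) '' {P | P ∈ L ∧ A ≤ P} ∧ P ≤ quotPartition A B}
      cQ) :
    cQ = quotPartition A cB := by
  obtain ⟨⟨hcBL, hcBB⟩, hcB_max⟩ := hcB
  have hAcB : A ≤ cB := hcB_max ⟨hA, hAB⟩
  obtain ⟨⟨⟨P, ⟨hPL, hAP⟩, rfl⟩, hPB⟩, hcQ_max⟩ := hcQ
  have hPcB : P ≤ cB := hcB_max ⟨hPL, (quotPartition_le_quotPartition_iff hAP hAB).1 hPB⟩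
  refine le_antisymm (quotPartition_mono A hPcB) (hcQ_max ⟨⟨cB, ⟨hcBL, hAcB⟩, rfl⟩, ?_⟩)
  exact quotPartition_mono A hcBB

/-- Let `C` be a finite set of cells, `τ` a partition on `C`, and `L` a
set of partitions on `C`, each finer than `τ`, containing the trivial partition `⊥` and
closed under the partition join `⊔`.  For `B` finer than `τ`, `cir_L(B)` is the greatest
element of `{P ∈ L : P ≤ B}`.  Fix `A ∈ L` and let `L/A := {P/A : P ∈ L, A ≤ P}` (a set of
partitions on `C/A`), with `cir_{L/A}` defined analogously.  Then for every partition `B`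
with `A ≤ B ≤ τ`:  `cir_{L/A}(B/A) = cir_L(B)/A`.  (Here `cB` plays the role of `cir_L(B)`
and `cQ` the role of `cir_{L/A}(B/A)`, each specified by its defining greatest-element
property.) -/
theorem cir_quotient_eq_quotient_cir {C : Type*} [Fintype C]
    (τ : Setoid C) (L : Set (Setoid C))
    (hLτ : ∀ P ∈ L, P ≤ τ)
    (hbot : ⊥ ∈ L)
    (hjoin : ∀ P ∈ L, ∀ Q ∈ L, P ⊔ Q ∈ L)
    (A : Setoid C) (hA : A ∈ L)
    (B : Setoid C) (hAB : A ≤ B) (hBτ : B ≤ τ)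
    (cB : Setoid C) (hcB : IsGreatest {P | P ∈ L ∧ P ≤ B} cB)
    (cQ : Setoid (Quotient A))
    (hcQ : IsGreatest
      {P | P ∈ (fun S => quotPartition A S) '' {P | P ∈ L ∧ A ≤ P} ∧ P ≤ quotPartition A B}
      cQ) :
    cQ = quotPartition A cB :=
  cir_quotient_eq_quotient_cir_general L A hA B hAB cB hcB cQ hcQ
end

section
/- Let A1 and A2 be partitions on C finer than τ and let f : X → Y be a function such that both A1 and A2 are f-invariant. Then A1 ∨ A2 is f-invariant. -/
/-- The polydiagonal `Δ_A` of a partition `A` (finer than the type map `τ`) in the total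
space `Π_{c ∈ C} Z (τ c)`: the set of states that agree (up to the type-equality coming
from `A` being finer than `τ`, hence via `HEq`) on cells of the same color. -/
def polydiag {C T : Type*} (τ : C → T) (Z : T → Type*) (A : Setoid C) :
    Set (∀ c, Z (τ c)) :=
  {x | ∀ c d, A c d → HEq (x c) (x d)}

/-- Fix a finite set of cells `C`, a type map `τ : C → T`, and state
and output sets `X i`, `Y i` (for each type `i`), each with at least two elements.  Let
`A1, A2` be partitions on `C` finer than `τ` and let `f : X → Y` be such that both `A1`
and `A2` are `f`-invariant (i.e. `f (Δ_{Ai}^X) ⊆ Δ_{Ai}^Y`).  Then the join `A1 ⊔ A2`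
is `f`-invariant. -/
theorem join_invariant {C T : Type*} [Fintype C]
    (τ : C → T) (X Y : T → Type*)
    (hX : ∀ i, Nontrivial (X i)) (hY : ∀ i, Nontrivial (Y i))
    (A1 A2 : Setoid C)
    (h1τ : ∀ c d, A1 c d → τ c = τ d)
    (h2τ : ∀ c d, A2 c d → τ c = τ d)
    (f : (∀ c, X (τ c)) → (∀ c, Y (τ c)))
    (h1 : f '' polydiag τ X A1 ⊆ polydiag τ Y A1)
    (h2 : f '' polydiag τ X A2 ⊆ polydiag τ Y A2) :
    f '' polydiag τ X (A1 ⊔ A2) ⊆ polydiag τ Y (A1 ⊔ A2) := by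
  rintro _ ⟨x, hx, rfl⟩ c d hcd
  have hx1 : x ∈ polydiag τ X A1 := fun c d h =>
    hx c d (le_sup_left (a := A1) (b := A2) h)
  have hx2 : x ∈ polydiag τ X A2 := fun c d h =>
    hx c d (le_sup_right (a := A1) (b := A2) h)
  have hf1 := h1 ⟨x, hx1, rfl⟩
  have hf2 := h2 ⟨x, hx2, rfl⟩
  rw [Setoid.sup_eq_eqvGen] at hcd
  induction hcd with
  | rel a b h => exact h.elim (hf1 a b) (hf2 a b)
  | refl => exact HEq.refl _
  | symm _ _ _ ih => exact ih.symm
  | trans _ _ _ _ _ ih1 ih2 => exact ih1.trans ih2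
end

section
/- Let F be any set of functions from X to Y, and let L_F be the set of partitions on C that are finer than τ and F-invariant. Then L_F, partially ordered by refinement ≤, is a lattice whose minimal element is the trivial partition ⊥ and whose join operation is the partition join ∨; in particular ⊥ ∈ L_F, for all A1, A2 ∈ L_F the join A1 ∨ A2 belongs to L_F and is the least upper bound of A1 and A2 in L_F, and every pair of elements of L_F has a greatest lower bound in L_F. -/
theorem polydiag_mono {C T : Type*} (τ : C → T) (Z : T → Type*) {A B : Setoid C}
    (h : A ≤ B) : polydiag τ Z B ⊆ polydiag τ Z A :=
  fun x hx c d hcd => hx c d (h hcd)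

/-- The sSup of a family of invariant partitions finer than τ is invariant and finer. -/
theorem sSup_mem_LF {C T : Type*} (τ : C → T) (X Y : T → Type*)
    (F : Set ((∀ c, X (τ c)) → (∀ c, Y (τ c)))) (S : Set (Setoid C))
    (hS : ∀ A ∈ S, (∀ c d, A c d → τ c = τ d) ∧
      ∀ f ∈ F, f '' polydiag τ X A ⊆ polydiag τ Y A) :
    (∀ c d, (sSup S) c d → τ c = τ d) ∧
      ∀ f ∈ F, f '' polydiag τ X (sSup S) ⊆ polydiag τ Y (sSup S) := by
  have hrel : ∀ c d, (sSup S) c d ↔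
      Relation.EqvGen (fun x y => ∃ r : Setoid C, r ∈ S ∧ r x y) c d := by
    intro c d
    rw [Setoid.sSup_eq_eqvGen]
    rfl
  constructor
  · intro c d h
    rw [hrel] at h
    induction h with
    | rel a b h => obtain ⟨r, hr, hab⟩ := h; exact (hS r hr).1 a b hab
    | refl a => rfl
    | symm a b _ ih => exact ih.symm
    | trans a b c _ _ ih1 ih2 => exact ih1.trans ih2
  · rintro f hf y ⟨x, hx, rfl⟩ c d h
    have hP : ∀ r ∈ S, f x ∈ polydiag τ Y r := by
      intro r hr
      exact (hS r hr).2 f hf ⟨x, polydiag_mono τ X (le_sSup hr) hx, rfl⟩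
    rw [hrel] at h
    induction h with
    | rel a b h => obtain ⟨r, hr, hab⟩ := h; exact hP r hr a b hab
    | refl a => rfl
    | symm a b _ ih => exact ih.symm
    | trans a b c _ _ ih1 ih2 => exact ih1.trans ih2

/-- Fix a finite set of cells `C`, a type map `τ : C → T`, and state
and output sets `X i`, `Y i`, each with at least two elements.  Let `F` be any set of
functions `X → Y` and let `L_F` be the set of partitions on `C` finer than `τ` that are
`F`-invariant.  Then `L_F`, ordered by refinement, is a lattice with minimal element the
trivial partition `⊥` and join the partition join `⊔`: `⊥ ∈ L_F` and is below every
element of `L_F`; for `A1, A2 ∈ L_F` the join `A1 ⊔ A2` belongs to `L_F` and is the least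
upper bound of `A1, A2` within `L_F`; and every pair of elements of `L_F` has a greatest
lower bound within `L_F`. -/
theorem invariant_partitions_lattice {C T : Type*} [Fintype C]
    (τ : C → T) (X Y : T → Type*)
    (hX : ∀ i, Nontrivial (X i)) (hY : ∀ i, Nontrivial (Y i))
    (F : Set ((∀ c, X (τ c)) → (∀ c, Y (τ c)))) :
    let LF : Set (Setoid C) := {A | (∀ c d, A c d → τ c = τ d) ∧
      ∀ f ∈ F, f '' polydiag τ X A ⊆ polydiag τ Y A}
    (⊥ ∈ LF) ∧ (∀ A ∈ LF, ⊥ ≤ A) ∧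
    (∀ A1 ∈ LF, ∀ A2 ∈ LF, A1 ⊔ A2 ∈ LF ∧
      IsLeast {B | B ∈ LF ∧ A1 ≤ B ∧ A2 ≤ B} (A1 ⊔ A2)) ∧
    (∀ A1 ∈ LF, ∀ A2 ∈ LF, ∃ M, IsGreatest {P | P ∈ LF ∧ P ≤ A1 ∧ P ≤ A2} M) := by
  intro LF
  have hbot : ⊥ ∈ LF := by
    constructor
    · intro c d h
      have : c = d := h
      rw [this]
    · rintro f hf y ⟨x, hx, rfl⟩ c d h
      have : c = d := h
      rw [this]
  refine ⟨hbot, fun A _ => bot_le, ?_, ?_⟩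
  · intro A1 h1 A2 h2
    have hsup : A1 ⊔ A2 ∈ LF := by
      have := sSup_mem_LF τ X Y F {A1, A2} (by
        rintro A (rfl | rfl)
        exacts [h1, h2])
      rwa [sSup_pair] at this
    exact ⟨hsup, ⟨hsup, le_sup_left, le_sup_right⟩,
      fun B ⟨_, hB1, hB2⟩ => sup_le hB1 hB2⟩
  · intro A1 h1 A2 h2
    refine ⟨sSup {P | P ∈ LF ∧ P ≤ A1 ∧ P ≤ A2}, ?_, fun P hP => le_sSup hP⟩
    exact ⟨sSup_mem_LF τ X Y F _ (fun A hA => hA.1),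
      sSup_le (fun P hP => hP.2.1), sSup_le (fun P hP => hP.2.2)⟩
end

section
/- Let ⋈1 and ⋈2 be balanced partitions on a network G. Then their join ⋈1 ∨ ⋈2 is balanced on G. -/
/-- For a network with cells `C`, type map `τ : C → T`, weight monoids `W i j` and
in-adjacency entries `M c d ∈ W (τ c) (τ d)`, and a partition `A` on `C`:
`rowSum τ W M A c e` is the sum `Σ_{e' : A(e') = A(e)} m_{c e'}` of the weights of the
edges into `c` coming from the cells of the color of `e` (each summand is transported
along the type equality `τ e' = τ e`, valid for partitions finer than `τ`). -/
noncomputable def rowSum {C T : Type*} (τ : C → T) (W : T → T → Type*)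
    [∀ i j, AddCommMonoid (W i j)] (M : ∀ c d : C, W (τ c) (τ d))
    (A : Setoid C) (c e : C) : W (τ c) (τ e) :=
  ∑ᶠ (e' : C) (h : A e' e ∧ τ e' = τ e), cast (congrArg (W (τ c)) h.2) (M c e')

/-- A partition `A` on the cells of a network is *balanced* if it is finer than the
cell-type partition `τ` and cells of the same color have equivalent colored
in-neighborhoods: for all `c, d` of the same color and every color (represented by a
cell `e`), the sums `Σ_{e' : A(e')=A(e)} m_{c e'}` and `Σ_{e' : A(e')=A(e)} m_{d e'}`
coincide (as elements of `W (τ c) (τ e) = W (τ d) (τ e)`, hence via `HEq`). -/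
def BalancedPartition {C T : Type*} (τ : C → T) (W : T → T → Type*)
    [∀ i j, AddCommMonoid (W i j)] (M : ∀ c d : C, W (τ c) (τ d))
    (A : Setoid C) : Prop :=
  (∀ c d, A c d → τ c = τ d) ∧
    ∀ c d, A c d → ∀ e, HEq (rowSum τ W M A c e) (rowSum τ W M A d e)

section Aux

open scoped Classical

variable {C T : Type*} [Fintype C] (τ : C → T) (W : T → T → Type*)
    [∀ i j, AddCommMonoid (W i j)] (M : ∀ c d : C, W (τ c) (τ d))

noncomputable def Fg (c : C) (t : T) (e' : C) : W (τ c) t :=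
  if h : τ e' = t then cast (congrArg (W (τ c)) h) (M c e') else 0

lemma cast_sum_left {i i' j : T} (h : i = i') (s : Finset C) (f : C → W i j) :
    cast (congrArg (fun t => W t j) h) (∑ x ∈ s, f x)
      = ∑ x ∈ s, cast (congrArg (fun t => W t j) h) (f x) := by
  subst h; simp

lemma cast_sum_right {i j j' : T} (h : j = j') (s : Finset C) (f : C → W i j) :
    cast (congrArg (W i) h) (∑ x ∈ s, f x) = ∑ x ∈ s, cast (congrArg (W i) h) (f x) := by
  subst h; simp

lemma cast_Fg (c : C) {t t' : T} (h : t = t') (e' : C) :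
    cast (congrArg (W (τ c)) h) (Fg τ W M c t e') = Fg τ W M c t' e' := by
  subst h; simp

lemma rowSumDef (A : Setoid C) (c e : C) : rowSum τ W M A c e =
    ∑ᶠ (e' : C) (h : A e' e ∧ τ e' = τ e), cast (congrArg (W (τ c)) h.2) (M c e') := rfl

lemma rowSum_eq_sum (A : Setoid C) (hA : ∀ x y, A x y → τ x = τ y) (c e : C) :
    rowSum τ W M A c e
      = ∑ e' ∈ Finset.univ.filter (fun e' => A e' e), Fg τ W M c (τ e) e' := by
  rw [rowSumDef]
  have h1 : ∀ e' : C,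
      (∑ᶠ (h : A e' e ∧ τ e' = τ e), cast (congrArg (W (τ c)) h.2) (M c e'))
        = if A e' e then Fg τ W M c (τ e) e' else 0 := by
    intro e'
    by_cases hP : A e' e
    · have ht : τ e' = τ e := hA _ _ hP
      have hval : ∀ h : A e' e ∧ τ e' = τ e,
          cast (congrArg (W (τ c)) h.2) (M c e') = Fg τ W M c (τ e) e' := by
        intro h
        rw [Fg, dif_pos ht]
      rw [finsum_congr hval, finsum_eq_if, if_pos ⟨hP, ht⟩, if_pos hP]
    · haveI : IsEmpty (A e' e ∧ τ e' = τ e) := ⟨fun h => hP h.1⟩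
      rw [finsum_of_isEmpty, if_neg hP]
  rw [finsum_congr h1, finsum_eq_sum_of_fintype, ← Finset.sum_filter]

lemma balanced_step (B J : Setoid C)
    (hBτ : ∀ x y, B x y → τ x = τ y)
    (hBbal : ∀ c d, B c d → ∀ e, HEq (rowSum τ W M B c e) (rowSum τ W M B d e))
    (hBJ : ∀ x y, B x y → J x y)
    (hJτ : ∀ x y, J x y → τ x = τ y)
    {c d : C} (hcd : B c d) (e : C) :
    HEq (rowSum τ W M J c e) (rowSum τ W M J d e) := by
  have htc : τ c = τ d := hBτ _ _ hcd
  rw [rowSum_eq_sum τ W M J hJτ c e, rowSum_eq_sum τ W M J hJτ d e]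
  refine heq_of_cast_eq (congrArg (fun t => W t (τ e)) htc) ?_
  set s := Finset.univ.filter (fun e' => J e' e) with hs
  set q : C → Quotient B := fun x => Quotient.mk B x with hq
  have hmaps : ∀ x ∈ s, q x ∈ s.image q := fun x hx => Finset.mem_image_of_mem q hx
  rw [← Finset.sum_fiberwise_of_maps_to hmaps (Fg τ W M c (τ e)),
      ← Finset.sum_fiberwise_of_maps_to hmaps (Fg τ W M d (τ e)),
      cast_sum_left W htc]
  refine Finset.sum_congr rfl ?_
  intro b hb
  obtain ⟨g, hg, rfl⟩ := Finset.mem_image.mp hb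
  have hgJ : J g e := by simpa [hs] using hg
  have hge : τ g = τ e := hJτ g e hgJ
  have fiber_eq : s.filter (fun e' => q e' = q g)
      = Finset.univ.filter (fun e' => B e' g) := by
    ext x
    simp only [Finset.mem_filter, Finset.mem_univ, true_and, hs, hq, Quotient.eq]
    constructor
    · rintro ⟨-, hx⟩; exact hx
    · intro hx; exact ⟨(J.trans (hBJ _ _ hx) hgJ), hx⟩
  rw [fiber_eq]
  have hsum : ∀ c' : C, ∑ x ∈ Finset.univ.filter (fun e' => B e' g), Fg τ W M c' (τ e) x
      = cast (congrArg (W (τ c')) hge) (rowSum τ W M B c' g) := by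
    intro c'
    rw [rowSum_eq_sum τ W M B hBτ, cast_sum_right W hge]
    exact Finset.sum_congr rfl fun x _ => (cast_Fg τ W M c' hge x).symm
  rw [hsum c, hsum d]
  have hbal : cast (congrArg (fun t => W t (τ g)) htc) (rowSum τ W M B c g)
      = rowSum τ W M B d g := cast_eq_iff_heq.mpr (hBbal c d hcd g)
  rw [← hbal, cast_cast, cast_cast]

end Aux

/-- Let `⋈1` and `⋈2` be balanced partitions on a network `G`
(finite cells `C`, type map `τ`, commutative monoids of weights `W i j`, in-adjacency
entries `M`).  Then their join `⋈1 ⊔ ⋈2` is balanced on `G`. -/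
theorem balanced_join {C T : Type*} [Fintype C]
    (τ : C → T) (W : T → T → Type*) [∀ i j, AddCommMonoid (W i j)]
    (M : ∀ c d : C, W (τ c) (τ d))
    (B1 B2 : Setoid C)
    (h1 : BalancedPartition τ W M B1) (h2 : BalancedPartition τ W M B2) :
    BalancedPartition τ W M (B1 ⊔ B2) := by
  have hrel : ∀ x y : C, (B1 ⊔ B2) x y → Relation.EqvGen (fun a b => B1 a b ∨ B2 a b) x y := by
    intro x y hxy
    rw [Setoid.sup_eq_eqvGen] at hxy
    exact hxy
  have hJτ' : ∀ x y : C, Relation.EqvGen (fun a b => B1 a b ∨ B2 a b) x y → τ x = τ y := by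
    intro x y hxy
    induction hxy with
    | rel a b h => exact h.elim (h1.1 a b) (h2.1 a b)
    | refl a => rfl
    | symm a b _ ih => exact ih.symm
    | trans a b c _ _ ih1 ih2 => exact ih1.trans ih2
  have hJτ : ∀ x y : C, (B1 ⊔ B2) x y → τ x = τ y := fun x y hxy => hJτ' x y (hrel x y hxy)
  refine ⟨hJτ, ?_⟩
  intro c d hcd e
  have hBJ1 : ∀ x y : C, B1 x y → (B1 ⊔ B2) x y := fun x y h =>
    Setoid.le_def.mp le_sup_left h
  have hBJ2 : ∀ x y : C, B2 x y → (B1 ⊔ B2) x y := fun x y h =>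
    Setoid.le_def.mp le_sup_right h
  have key : ∀ a b : C, Relation.EqvGen (fun a b => B1 a b ∨ B2 a b) a b →
      HEq (rowSum τ W M (B1 ⊔ B2) a e) (rowSum τ W M (B1 ⊔ B2) b e) := by
    intro a b hab
    induction hab with
    | rel a b h =>
      rcases h with h | h
      · exact balanced_step τ W M B1 (B1 ⊔ B2) h1.1 h1.2 hBJ1 hJτ h e
      · exact balanced_step τ W M B2 (B1 ⊔ B2) h2.1 h2.2 hBJ2 hJτ h e
    | refl a => exact HEq.rfl
    | symm a b _ ih => exact ih.symm
    | trans a b c _ _ ih1 ih2 => exact ih1.trans ih2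
  exact key c d (hrel c d hcd)
end

section
/- Let ⋈01 be a balanced partition on a network G0 with cells C0, types τ0 and adjacency entries m_{cd}, and let G1 = G0/⋈01 be the quotient network: its cells are C0/⋈01, its type map is τ0/⋈01, and its adjacency entries are q_{kl} = Σ_{e : ⋈01(e)=l} m_{ce} for any c with ⋈01(c)=k (well-defined by balancedness). Let ⋈02 be a partition on C0 finer than τ0 with ⋈01 ≤ ⋈02, and set ⋈12 := ⋈02/⋈01. Then ⋈02 is balanced on G0 if and only if ⋈12 is balanced on G1; and when these hold, the quotient networks G0/⋈02 and G1/⋈12 coincide (same cell set, same type map, and same adjacency entries). -/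
open scoped Classical

theorem finsum_dite_prop {M : Type*} [AddCommMonoid M] (P : Prop) (f : P → M) :
    (∑ᶠ h : P, f h) = if h : P then f h else 0 := by
  by_cases h : P
  · haveI : Unique P := ⟨⟨h⟩, fun _ => rfl⟩
    rw [finsum_unique, dif_pos h]
  · haveI : IsEmpty P := ⟨h⟩
    rw [finsum_of_isEmpty, dif_neg h]

theorem heq_of_cast_eq_cast {α β γ : Sort u} {a : α} {b : β} (h1 : α = γ) (h2 : β = γ)
    (h : cast h1 a = cast h2 b) : HEq a b :=
  ((cast_heq h1 a).symm.trans (heq_of_eq h)).trans (cast_heq h2 b)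

theorem cast_eq_cast_of_heq {α β γ : Sort u} {a : α} {b : β} (h : HEq a b)
    (h1 : α = γ) (h2 : β = γ) : cast h1 a = cast h2 b := by
  cases h; rfl

theorem rowSum_cast {C T : Type*} [Fintype C] (τ : C → T) (W : T → T → Type*)
    [∀ i j, AddCommMonoid (W i j)] (M : ∀ c d : C, W (τ c) (τ d)) (A : Setoid C)
    (c e : C) {i j : T} (hc : τ c = i) (he : τ e = j) :
    cast (by rw [hc, he]) (rowSum τ W M A c e)
      = ∑ e' : C, if h : A e' e ∧ τ e' = τ e then
          cast (show W (τ c) (τ e') = W i j by rw [hc, h.2, he]) (M c e') else 0 := by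
  subst hc he
  rw [cast_eq, rowSum, finsum_eq_sum_of_fintype]
  refine Finset.sum_congr rfl fun e' _ => ?_
  rw [finsum_dite_prop]
  by_cases h : A e' e ∧ τ e' = τ e
  · rw [dif_pos h, dif_pos h]
  · rw [dif_neg h, dif_neg h]

/-- Decomposition of an `A02`-`rowSum` into `A01`-`rowSum`s over the `A01`-classes
contained in the relevant `A02`-class. -/
theorem star_decomp {C T : Type*} [Fintype C] (τ : C → T) (W : T → T → Type*)
    [∀ i j, AddCommMonoid (W i j)] (M : ∀ c d : C, W (τ c) (τ d))
    (A01 A02 : Setoid C) [Fintype (Quotient A01)]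
    (hτ01 : ∀ a b, A01 a b → τ a = τ b) (h0102 : A01 ≤ A02)
    (c e : C) {i j : T} (hc : τ c = i) (he : τ e = j) :
    cast (by rw [hc, he]) (rowSum τ W M A02 c e)
      = ∑ l : Quotient A01,
          if h : A02 (Quotient.out l) e ∧ τ (Quotient.out l) = τ e then
            cast (show W (τ c) (τ (Quotient.out l)) = W i j by rw [hc, h.2, he])
              (rowSum τ W M A01 c (Quotient.out l)) else 0 := by
  rw [rowSum_cast τ W M A02 c e hc he,
    ← Finset.sum_fiberwise Finset.univ (fun e' => (Quotient.mk A01 e' : Quotient A01))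
      (fun e' => if h : A02 e' e ∧ τ e' = τ e then
          cast (show W (τ c) (τ e') = W i j by rw [hc, h.2, he]) (M c e') else 0)]
  refine Finset.sum_congr rfl fun l _ => ?_
  by_cases hl : A02 (Quotient.out l) e ∧ τ (Quotient.out l) = τ e
  · rw [dif_pos hl, rowSum_cast τ W M A01 c (Quotient.out l) hc (hl.2.trans he),
      Finset.sum_filter]
    refine Finset.sum_congr rfl fun e' _ => ?_
    by_cases h1 : A01 e' (Quotient.out l)
    · have hm : (Quotient.mk A01 e' : Quotient A01) = l := by
        rw [← Quotient.out_eq l]; exact Quotient.sound h1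
      have h2 : A02 e' e := A02.trans (h0102 h1) hl.1
      have h3 : τ e' = τ e := (hτ01 _ _ h1).trans hl.2
      rw [if_pos hm, dif_pos ⟨h2, h3⟩, dif_pos (⟨h1, hτ01 _ _ h1⟩ :
        A01 e' (Quotient.out l) ∧ τ e' = τ (Quotient.out l))]
    · have hm : (Quotient.mk A01 e' : Quotient A01) ≠ l := by
        intro hmm
        exact h1 (Quotient.exact (hmm.trans (Quotient.out_eq l).symm))
      rw [if_neg hm, dif_neg (fun hh => h1 hh.1)]
  · rw [dif_neg hl]
    refine Finset.sum_eq_zero fun e' he' => ?_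
    rw [Finset.mem_filter] at he'
    have h1 : A01 e' (Quotient.out l) :=
      Quotient.exact (he'.2.trans (Quotient.out_eq l).symm)
    refine dif_neg fun hh => hl ⟨A02.trans (A02.symm (h0102 h1)) hh.1,
      (hτ01 _ _ h1).symm.trans hh.2⟩

/-- Column invariance of `rowSum` for partitions finer than the type map. -/
theorem rowSum_col {C T : Type*} [Fintype C] (τ : C → T) (W : T → T → Type*)
    [∀ i j, AddCommMonoid (W i j)] (M : ∀ c d : C, W (τ c) (τ d)) (A : Setoid C)
    (hτ : ∀ a b, A a b → τ a = τ b) (c e e₂ : C) (hee : A e e₂) {i j : T}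
    (hc : τ c = i) (he : τ e = j) :
    cast (show W (τ c) (τ e) = W i j by rw [hc, he]) (rowSum τ W M A c e)
      = cast (show W (τ c) (τ e₂) = W i j by rw [hc, (hτ _ _ hee).symm.trans he])
          (rowSum τ W M A c e₂) := by
  rw [rowSum_cast τ W M A c e hc he,
    rowSum_cast τ W M A c e₂ hc ((hτ _ _ hee).symm.trans he)]
  refine Finset.sum_congr rfl fun e' _ => ?_
  by_cases h1 : A e' e ∧ τ e' = τ e
  · rw [dif_pos h1, dif_pos (⟨A.trans h1.1 hee, h1.2.trans (hτ _ _ hee)⟩ :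
      A e' e₂ ∧ τ e' = τ e₂)]
  · rw [dif_neg h1, dif_neg (fun hh => h1 ⟨A.trans hh.1 (A.symm hee),
      hh.2.trans (hτ _ _ hee).symm⟩)]

/-- Row invariance of an `A02`-`rowSum` along `A01`-related rows, for a balanced
refinement `A01 ≤ A02`. -/
theorem rowSum_row {C T : Type*} [Fintype C] (τ : C → T) (W : T → T → Type*)
    [∀ i j, AddCommMonoid (W i j)] (M : ∀ c d : C, W (τ c) (τ d))
    (A01 A02 : Setoid C) [Fintype (Quotient A01)]
    (hbal01 : BalancedPartition τ W M A01) (h0102 : A01 ≤ A02)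
    (c c' e : C) (hcc' : A01 c c') {i j : T} (hc : τ c = i) (he : τ e = j) :
    cast (show W (τ c) (τ e) = W i j by rw [hc, he]) (rowSum τ W M A02 c e)
      = cast (show W (τ c') (τ e) = W i j by
            rw [(hbal01.1 _ _ hcc').symm.trans hc, he])
          (rowSum τ W M A02 c' e) := by
  rw [star_decomp τ W M A01 A02 hbal01.1 h0102 c e hc he,
    star_decomp τ W M A01 A02 hbal01.1 h0102 c' e
      ((hbal01.1 _ _ hcc').symm.trans hc) he]
  refine Finset.sum_congr rfl fun l _ => ?_
  by_cases h1 : A02 (Quotient.out l) e ∧ τ (Quotient.out l) = τ e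
  · rw [dif_pos h1, dif_pos h1]
    exact cast_eq_cast_of_heq (hbal01.2 c c' hcc' (Quotient.out l)) _ _
  · rw [dif_neg h1, dif_neg h1]

/-- The key identity: `rowSum` of the quotient network equals `rowSum` of the
original network at out-representatives. -/
theorem quot_rowSum {C T : Type*} [Fintype C] (τ : C → T) (W : T → T → Type*)
    [∀ i j, AddCommMonoid (W i j)] (M : ∀ c d : C, W (τ c) (τ d))
    (A01 A02 : Setoid C) [Fintype (Quotient A01)]
    (hτ01 : ∀ a b, A01 a b → τ a = τ b) (h0102 : A01 ≤ A02)
    (k l : Quotient A01) {i j : T}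
    (hk : τ (Quotient.out k) = i) (hl : τ (Quotient.out l) = j) :
    cast (by rw [hk, hl])
        (rowSum (fun k => τ (Quotient.out k)) W
          (fun k l => rowSum τ W M A01 (Quotient.out k) (Quotient.out l))
          (Setoid.comap Quotient.out A02) k l)
      = cast (by rw [hk, hl])
          (rowSum τ W M A02 (Quotient.out k) (Quotient.out l)) := by
  rw [rowSum_cast (fun k => τ (Quotient.out k)) W
      (fun k l => rowSum τ W M A01 (Quotient.out k) (Quotient.out l))
      (Setoid.comap Quotient.out A02) k l hk hl,
    star_decomp τ W M A01 A02 hτ01 h0102 (Quotient.out k) (Quotient.out l) hk hl]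
  exact Finset.sum_congr rfl fun l' _ =>
    dite_congr rfl (fun h => rfl) (fun h => rfl)

/-- Let `⋈01` (here `A01`) be a balanced partition on a network `G0`
with cells `C0`, types `τ0` and adjacency entries `M0`, and let `G1 = G0/⋈01` be the
quotient network: its cells are `C0/⋈01 = Quotient A01`, its type map is
`τ1 k = τ0 (k.out)` and its adjacency entries are
`M1 k l = Σ_{e : ⋈01(e) = l} m_{k.out, e}` (well-defined by balancedness).  Let `⋈02`
(here `A02`) be a partition on `C0` finer than `τ0` with `⋈01 ≤ ⋈02`, and let
`⋈12 := ⋈02/⋈01` be the quotient partition on `C0/⋈01` (relating two colors of `⋈01`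
iff their representatives are `⋈02`-related).  Then `⋈02` is balanced on `G0` iff `⋈12`
is balanced on `G1`; and when these hold, the quotient networks `G0/⋈02` and `G1/⋈12`
coincide: under the canonical bijection `e` of their cell sets (sending the `⋈02`-class
of a cell `c` to the `⋈12`-class of the `⋈01`-class of `c`), the type maps and the
adjacency entries agree. -/
theorem quotient_network_balanced_correspondence {C0 T : Type*} [Fintype C0]
    (τ0 : C0 → T) (W : T → T → Type*) [∀ i j, AddCommMonoid (W i j)]
    (M0 : ∀ c d : C0, W (τ0 c) (τ0 d))
    (A01 : Setoid C0) (hbal01 : BalancedPartition τ0 W M0 A01)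
    (A02 : Setoid C0) (hτ02 : ∀ c d, A02 c d → τ0 c = τ0 d) (h0102 : A01 ≤ A02) :
    let τ1 : Quotient A01 → T := fun k => τ0 (Quotient.out k)
    let M1 : ∀ k l : Quotient A01, W (τ1 k) (τ1 l) :=
      fun k l => rowSum τ0 W M0 A01 (Quotient.out k) (Quotient.out l)
    let A12 : Setoid (Quotient A01) := Setoid.comap Quotient.out A02
    (BalancedPartition τ0 W M0 A02 ↔ BalancedPartition τ1 W M1 A12) ∧
    (BalancedPartition τ0 W M0 A02 →
      ∃ e : Quotient A02 ≃ Quotient A12,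
        (∀ c : C0, e (Quotient.mk A02 c) = Quotient.mk A12 (Quotient.mk A01 c)) ∧
        (∀ k : Quotient A02, τ0 (Quotient.out k) = τ1 (Quotient.out (e k))) ∧
        ∀ k l : Quotient A02,
          HEq (rowSum τ0 W M0 A02 (Quotient.out k) (Quotient.out l))
            (rowSum τ1 W M1 A12 (Quotient.out (e k)) (Quotient.out (e l)))) := by
  intro τ1 M1 A12
  haveI : Fintype (Quotient A01) := Fintype.ofFinite _
  have hτ01 : ∀ a b, A01 a b → τ0 a = τ0 b := hbal01.1
  constructor
  · constructor
    · -- hbal02 → hbal12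
      intro hbal02
      refine ⟨fun k k' h => hτ02 _ _ h, fun k k' h l => ?_⟩
      have h' : A02 (Quotient.out k) (Quotient.out k') := h
      refine heq_of_cast_eq_cast
        (show W (τ1 k) (τ1 l) = W (τ0 (Quotient.out k)) (τ0 (Quotient.out l)) from rfl)
        (show W (τ1 k') (τ1 l) = W (τ0 (Quotient.out k)) (τ0 (Quotient.out l)) by
          rw [show τ1 k' = τ0 (Quotient.out k) from (hτ02 _ _ h').symm]) ?_
      calc
        cast (show W (τ1 k) (τ1 l) = W (τ0 (Quotient.out k)) (τ0 (Quotient.out l))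
              from rfl) (rowSum τ1 W M1 A12 k l)
            = cast rfl (rowSum τ0 W M0 A02 (Quotient.out k) (Quotient.out l)) :=
          quot_rowSum τ0 W M0 A01 A02 hτ01 h0102 k l rfl rfl
        _ = cast (show W (τ0 (Quotient.out k')) (τ0 (Quotient.out l))
                = W (τ0 (Quotient.out k)) (τ0 (Quotient.out l)) by
                rw [hτ02 _ _ h'])
              (rowSum τ0 W M0 A02 (Quotient.out k') (Quotient.out l)) :=
          cast_eq_cast_of_heq (hbal02.2 _ _ h' (Quotient.out l)) _ _
        _ = cast (show W (τ1 k') (τ1 l)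
                = W (τ0 (Quotient.out k)) (τ0 (Quotient.out l)) by
                rw [show τ1 k' = τ0 (Quotient.out k) from (hτ02 _ _ h').symm])
              (rowSum τ1 W M1 A12 k' l) :=
          (quot_rowSum τ0 W M0 A01 A02 hτ01 h0102 k' l (hτ02 _ _ h').symm rfl).symm
    · -- hbal12 → hbal02
      intro hbal12
      refine ⟨hτ02, fun c d hcd e => ?_⟩
      have hoc : A01 c (Quotient.out (Quotient.mk A01 c)) :=
        A01.symm (Quotient.mk_out c)
      have hod : A01 d (Quotient.out (Quotient.mk A01 d)) :=
        A01.symm (Quotient.mk_out d)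
      have hoe : A02 e (Quotient.out (Quotient.mk A01 e)) :=
        A02.symm (h0102 (Quotient.mk_out e))
      have hA12cd : A12 (Quotient.mk A01 c) (Quotient.mk A01 d) :=
        show A02 (Quotient.out (Quotient.mk A01 c)) (Quotient.out (Quotient.mk A01 d))
          from A02.trans (h0102 (Quotient.mk_out c))
            (A02.trans hcd (A02.symm (h0102 (Quotient.mk_out d))))
      refine heq_of_cast_eq_cast rfl
        (show W (τ0 d) (τ0 e) = W (τ0 c) (τ0 e) by rw [hτ02 _ _ hcd]) ?_
      calc
        cast rfl (rowSum τ0 W M0 A02 c e)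
            = cast (show W (τ0 (Quotient.out (Quotient.mk A01 c))) (τ0 e)
                  = W (τ0 c) (τ0 e) by rw [hτ01 _ _ hoc]) _ :=
          rowSum_row τ0 W M0 A01 A02 hbal01 h0102 c _ e hoc rfl rfl
        _ = cast (show W (τ0 (Quotient.out (Quotient.mk A01 c)))
                  (τ0 (Quotient.out (Quotient.mk A01 e))) = W (τ0 c) (τ0 e) by
                rw [hτ01 _ _ hoc, hτ02 _ _ hoe]) _ :=
          rowSum_col τ0 W M0 A02 hτ02 _ e _ hoe ((hτ01 _ _ hoc).symm) rfl
        _ = cast (show W (τ1 (Quotient.mk A01 c)) (τ1 (Quotient.mk A01 e))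
                  = W (τ0 c) (τ0 e) by
                rw [show τ1 (Quotient.mk A01 c) = τ0 c from (hτ01 _ _ hoc).symm,
                  show τ1 (Quotient.mk A01 e) = τ0 e from (hτ02 _ _ hoe).symm])
              (rowSum τ1 W M1 A12 (Quotient.mk A01 c) (Quotient.mk A01 e)) :=
          (quot_rowSum τ0 W M0 A01 A02 hτ01 h0102 _ _
            (hτ01 _ _ hoc).symm (hτ02 _ _ hoe).symm).symm
        _ = cast (show W (τ1 (Quotient.mk A01 d)) (τ1 (Quotient.mk A01 e))
                  = W (τ0 c) (τ0 e) by
                rw [show τ1 (Quotient.mk A01 d) = τ0 c from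
                    (hτ01 _ _ hod).symm.trans (hτ02 _ _ hcd).symm,
                  show τ1 (Quotient.mk A01 e) = τ0 e from (hτ02 _ _ hoe).symm])
              (rowSum τ1 W M1 A12 (Quotient.mk A01 d) (Quotient.mk A01 e)) :=
          cast_eq_cast_of_heq (hbal12.2 _ _ hA12cd (Quotient.mk A01 e)) _ _
        _ = cast (show W (τ0 (Quotient.out (Quotient.mk A01 d)))
                  (τ0 (Quotient.out (Quotient.mk A01 e))) = W (τ0 c) (τ0 e) by
                rw [← hτ01 _ _ hod, ← hτ02 _ _ hoe, ← hτ02 _ _ hcd]) _ :=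
          quot_rowSum τ0 W M0 A01 A02 hτ01 h0102 _ _
            ((hτ01 _ _ hod).symm.trans (hτ02 _ _ hcd).symm) (hτ02 _ _ hoe).symm
        _ = cast (show W (τ0 (Quotient.out (Quotient.mk A01 d))) (τ0 e)
                  = W (τ0 c) (τ0 e) by rw [← hτ01 _ _ hod, ← hτ02 _ _ hcd]) _ :=
          (rowSum_col τ0 W M0 A02 hτ02 _ e _ hoe
            ((hτ01 _ _ hod).symm.trans (hτ02 _ _ hcd).symm) rfl).symm
        _ = cast (show W (τ0 d) (τ0 e) = W (τ0 c) (τ0 e) by rw [hτ02 _ _ hcd])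
              (rowSum τ0 W M0 A02 d e) :=
          (rowSum_row τ0 W M0 A01 A02 hbal01 h0102 d _ e hod
            (hτ02 _ _ hcd).symm rfl).symm
  · -- the equivalence of quotient networks
    intro hbal02
    have hA12mk : ∀ a b : C0, A02 a b →
        A12 (Quotient.mk A01 a) (Quotient.mk A01 b) := fun a b hab =>
      show A02 (Quotient.out (Quotient.mk A01 a)) (Quotient.out (Quotient.mk A01 b))
        from A02.trans (h0102 (Quotient.mk_out a))
          (A02.trans hab (A02.symm (h0102 (Quotient.mk_out b))))
    have li : ∀ c : C0,
        (Quotient.lift (fun k : Quotient A01 => Quotient.mk A02 (Quotient.out k))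
            (fun a b hab => Quotient.sound hab)
          (Quotient.lift (fun c => Quotient.mk A12 (Quotient.mk A01 c))
            (fun a b hab => Quotient.sound (hA12mk a b hab))
            (Quotient.mk A02 c))) = Quotient.mk A02 c := fun c =>
      Quotient.sound (h0102 (Quotient.mk_out c))
    let E : Quotient A02 ≃ Quotient A12 :=
      { toFun := Quotient.lift (fun c => Quotient.mk A12 (Quotient.mk A01 c))
          (fun a b hab => Quotient.sound (hA12mk a b hab))
        invFun := Quotient.lift
          (fun k : Quotient A01 => Quotient.mk A02 (Quotient.out k))
          (fun a b hab => Quotient.sound hab)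
        left_inv := fun x => Quotient.inductionOn x li
        right_inv := fun y => Quotient.inductionOn y fun k =>
          Quotient.sound (show A02 (Quotient.out (Quotient.mk A01 (Quotient.out k)))
            (Quotient.out k) from h0102 (Quotient.mk_out (Quotient.out k))) }
    have hEmk : ∀ c : C0, E (Quotient.mk A02 c)
        = Quotient.mk A12 (Quotient.mk A01 c) := fun c => rfl
    have hrel : ∀ k : Quotient A02,
        A02 (Quotient.out k) (Quotient.out (Quotient.out (E k))) := by
      intro k
      have hEk : E k = Quotient.mk A12 (Quotient.mk A01 (Quotient.out k)) := by
        conv_lhs => rw [← Quotient.out_eq k]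
        rfl
      have h1 : A12 (Quotient.out (E k)) (Quotient.mk A01 (Quotient.out k)) := by
        rw [hEk]; exact Quotient.mk_out _
      have h1' : A02 (Quotient.out (Quotient.out (E k)))
          (Quotient.out (Quotient.mk A01 (Quotient.out k))) := h1
      exact A02.symm (A02.trans h1' (h0102 (Quotient.mk_out (Quotient.out k))))
    refine ⟨E, hEmk, fun k => hτ02 _ _ (hrel k), fun k l => ?_⟩
    have hk := hrel k
    have hl := hrel l
    refine heq_of_cast_eq_cast rfl
      (show W (τ1 (Quotient.out (E k))) (τ1 (Quotient.out (E l)))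
          = W (τ0 (Quotient.out k)) (τ0 (Quotient.out l)) by
        rw [show τ1 (Quotient.out (E k)) = τ0 (Quotient.out k) from
            (hτ02 _ _ hk).symm,
          show τ1 (Quotient.out (E l)) = τ0 (Quotient.out l) from
            (hτ02 _ _ hl).symm]) ?_
    calc
      cast rfl (rowSum τ0 W M0 A02 (Quotient.out k) (Quotient.out l))
          = cast (show W (τ0 (Quotient.out (Quotient.out (E k)))) (τ0 (Quotient.out l))
                = W (τ0 (Quotient.out k)) (τ0 (Quotient.out l)) by
              rw [hτ02 _ _ hk]) _ :=
        cast_eq_cast_of_heq (hbal02.2 _ _ hk (Quotient.out l)) _ _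
      _ = cast (show W (τ0 (Quotient.out (Quotient.out (E k))))
                (τ0 (Quotient.out (Quotient.out (E l))))
                = W (τ0 (Quotient.out k)) (τ0 (Quotient.out l)) by
              rw [hτ02 _ _ hk, hτ02 _ _ hl]) _ :=
        rowSum_col τ0 W M0 A02 hτ02 _ _ _ hl ((hτ02 _ _ hk).symm) rfl
      _ = cast (show W (τ1 (Quotient.out (E k))) (τ1 (Quotient.out (E l)))
                = W (τ0 (Quotient.out k)) (τ0 (Quotient.out l)) by
              rw [show τ1 (Quotient.out (E k)) = τ0 (Quotient.out k) from
                  (hτ02 _ _ hk).symm,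
                show τ1 (Quotient.out (E l)) = τ0 (Quotient.out l) from
                  (hτ02 _ _ hl).symm])
            (rowSum τ1 W M1 A12 (Quotient.out (E k)) (Quotient.out (E l))) :=
        (quot_rowSum τ0 W M0 A01 A02 hτ01 h0102 _ _
          (hτ02 _ _ hk).symm (hτ02 _ _ hl).symm).symm
end

section
/- Let ⋈ be a partition on C finer than τ, and let F_G be a set of functions from X to Y such that ⋈ is f-invariant for every f ∈ F_G; for each such f let f/⋈ : X̄ → Ȳ be its quotient function, and set F_Q := {f/⋈ : f ∈ F_G}. Then for every partition A on C with ⋈ ≤ A ≤ τ: A is F_G-invariant if and only if the quotient partition A/⋈ (a partition on C/⋈ finer than τ/⋈) is F_Q-invariant, where invariance of A/⋈ under g : X̄ → Ȳ means g(Δ_{A/⋈}^{X̄}) ⊆ Δ_{A/⋈}^{Ȳ}. -/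
/-- For a partition `B` on `C` finer than `τ`, the injective map `P : X̄ → X` from the
reduced state space `X̄ = Π_{k ∈ C/B} X (τ k)` (the type of a color being the type of any
of its representatives) to the full state space, defined by `(P x̄)_c = x̄_{B(c)}`;
its image is the polydiagonal `Δ_B^X`. -/
def liftState {C T : Type*} (τ : C → T) (X : T → Type*) (B : Setoid C)
    (hBτ : ∀ c d, B c d → τ c = τ d)
    (x : ∀ k : Quotient B, X (τ (Quotient.out k))) : ∀ c, X (τ c) :=
  fun c => cast (congrArg X (hBτ _ _ (Quotient.mk_out c))) (x (Quotient.mk B c))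

lemma liftState_heq {C T : Type*} (τ : C → T) (Z : T → Type*) (B : Setoid C)
    (hBτ : ∀ c d, B c d → τ c = τ d) (x : ∀ k : Quotient B, Z (τ (Quotient.out k)))
    (c : C) : HEq (liftState τ Z B hBτ x c) (x (Quotient.mk B c)) :=
  cast_heq _ _

lemma heq_of_quot_eq {C T : Type*} {τ : C → T} {Z : T → Type*} {B : Setoid C}
    (x : ∀ k : Quotient B, Z (τ (Quotient.out k))) {k l : Quotient B} (h : k = l) :
    HEq (x k) (x l) := by subst h; rfl

lemma lift_mem_iff {C T : Type*} (τ : C → T) (Z : T → Type*) (B : Setoid C)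
    (hBτ : ∀ c d, B c d → τ c = τ d) (A : Setoid C) (hBA : B ≤ A)
    (x : ∀ k : Quotient B, Z (τ (Quotient.out k))) :
    liftState τ Z B hBτ x ∈ polydiag τ Z A ↔
      x ∈ polydiag (fun k : Quotient B => τ (Quotient.out k)) Z
        (Setoid.comap Quotient.out A) := by
  have key := liftState_heq τ Z B hBτ x
  have key2 : ∀ k : Quotient B, HEq (x (Quotient.mk B (Quotient.out k))) (x k) :=
    fun k => heq_of_quot_eq x (Quotient.out_eq k)
  constructor
  · intro h k l hkl
    exact (key2 k).symm.trans ((key k.out).symm.trans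
      (((h _ _ hkl).trans (key l.out)).trans (key2 l)))
  · intro h c d hcd
    have hA : Setoid.comap Quotient.out A (Quotient.mk B c) (Quotient.mk B d) :=
      A.trans (hBA (Quotient.mk_out c)) (A.trans hcd (A.symm (hBA (Quotient.mk_out d))))
    exact (key c).trans ((h _ _ hA).trans (key d).symm)

lemma lift_mem_B {C T : Type*} (τ : C → T) (Z : T → Type*) (B : Setoid C)
    (hBτ : ∀ c d, B c d → τ c = τ d) (x : ∀ k : Quotient B, Z (τ (Quotient.out k))) :
    liftState τ Z B hBτ x ∈ polydiag τ Z B := fun c d hcd =>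
  (liftState_heq τ Z B hBτ x c).trans
    ((heq_of_quot_eq x (Quotient.sound hcd)).trans (liftState_heq τ Z B hBτ x d).symm)

/-- Fix a finite set of cells `C`, a type map `τ : C → T`, and state
and output sets `X i`, `Y i`, each with at least two elements.  Let `⋈` (here `B`) be a
partition on `C` finer than `τ`, and let `F_G` be a set of functions `X → Y` such that
`⋈` is `f`-invariant for every `f ∈ F_G`.  Let `F_Q` be the set of quotient functions
`f/⋈ : X̄ → Ȳ` for `f ∈ F_G`, i.e. the functions `g` such that `f ∘ P = P ∘ g` for some
`f ∈ F_G`, where `P` is the canonical map `X̄ → X` (and `Ȳ → Y`).  Then for every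
partition `A` on `C` with `⋈ ≤ A ≤ τ`:  `A` is `F_G`-invariant iff the quotient
partition `A/⋈` (a partition on `C/⋈`, relating two colors of `⋈` iff their
representatives are `A`-related) is `F_Q`-invariant. -/
theorem invariant_iff_quotient_invariant {C T : Type*} [Fintype C]
    (τ : C → T) (X Y : T → Type*)
    (hX : ∀ i, Nontrivial (X i)) (hY : ∀ i, Nontrivial (Y i))
    (B : Setoid C) (hBτ : ∀ c d, B c d → τ c = τ d)
    (FG : Set ((∀ c, X (τ c)) → (∀ c, Y (τ c))))
    (hFGinv : ∀ f ∈ FG, f '' polydiag τ X B ⊆ polydiag τ Y B)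
    (FQ : Set ((∀ k : Quotient B, X (τ (Quotient.out k))) →
      (∀ k : Quotient B, Y (τ (Quotient.out k)))))
    (hFQ : ∀ g, g ∈ FQ ↔ ∃ f ∈ FG, ∀ x,
      f (liftState τ X B hBτ x) = liftState τ Y B hBτ (g x))
    (A : Setoid C) (hBA : B ≤ A) (hAτ : ∀ c d, A c d → τ c = τ d) :
    (∀ f ∈ FG, f '' polydiag τ X A ⊆ polydiag τ Y A) ↔
      (∀ g ∈ FQ,
        g '' polydiag (fun k : Quotient B => τ (Quotient.out k)) X
            (Setoid.comap Quotient.out A) ⊆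
          polydiag (fun k : Quotient B => τ (Quotient.out k)) Y
            (Setoid.comap Quotient.out A)) := by
  constructor
  · intro h g hg
    rintro _ ⟨x, hx, rfl⟩
    obtain ⟨f, hf, hfg⟩ := (hFQ g).1 hg
    rw [← lift_mem_iff τ Y B hBτ A hBA]
    rw [← hfg x]
    exact h f hf ⟨_, (lift_mem_iff τ X B hBτ A hBA x).2 hx, rfl⟩
  · intro h f hf
    rintro _ ⟨x, hx, rfl⟩
    -- descend x to the quotient
    have hxB : x ∈ polydiag τ X B := fun c d hcd => hx c d (hBA hcd)
    set x' : ∀ k : Quotient B, X (τ (Quotient.out k)) := fun k => x (Quotient.out k) with hx'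
    have hlift : liftState τ X B hBτ x' = x := by
      funext c
      exact eq_of_heq ((cast_heq _ _).trans (hxB _ _ (Quotient.mk_out c)))
    -- the quotient function of f
    set g : (∀ k : Quotient B, X (τ (Quotient.out k))) →
        (∀ k : Quotient B, Y (τ (Quotient.out k))) :=
      fun z k => f (liftState τ X B hBτ z) (Quotient.out k) with hgdef
    have hgQ : g ∈ FQ := by
      rw [hFQ]
      refine ⟨f, hf, fun z => ?_⟩
      funext c
      have hzB : f (liftState τ X B hBτ z) ∈ polydiag τ Y B :=
        hFGinv f hf ⟨_, lift_mem_B τ X B hBτ z, rfl⟩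
      exact (eq_of_heq ((cast_heq _ _).trans (hzB _ _ (Quotient.mk_out c)))).symm
    have hx' : x' ∈ polydiag (fun k : Quotient B => τ (Quotient.out k)) X
        (Setoid.comap Quotient.out A) := by
      rw [← lift_mem_iff τ X B hBτ A hBA, hlift]; exact hx
    have := h g hgQ ⟨x', hx', rfl⟩
    have hfx : f x = liftState τ Y B hBτ (g x') := by
      rw [← hlift, hgdef]
      funext c
      exact eq_of_heq ((hFGinv f hf ⟨_, lift_mem_B τ X B hBτ x', rfl⟩ _ _
        (Quotient.mk_out c)).symm.trans (cast_heq _ _).symm)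
    rw [hfx]
    exact (lift_mem_iff τ Y B hBτ A hBA (g x')).2 this
end

section
/- On a finite directed graph, if a partition A on the cell set C is V⁻-matched then it is V⁻_k-matched for every k ≥ 1, and consequently A is R⁻-matched. -/
/-- The cumulative in-neighborhood `V⁻(c) = {c} ∪ N⁻(c)` of a cell `c` in a directed
graph with edge relation `rel d c` (meaning `d → c`). -/
def cumInNeigh {C : Type*} (rel : C → C → Prop) (c : C) : Set C :=
  insert c {d | rel d c}

/-- The `k`-th cumulative in-neighborhood: `V⁻_0(c) = {c}` and
`V⁻_{k+1}(c) = ⋃_{d ∈ V⁻_k(c)} V⁻(d)`. -/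
def cumInNeighIter {C : Type*} (rel : C → C → Prop) : ℕ → C → Set C
  | 0, c => {c}
  | k + 1, c => ⋃ d ∈ cumInNeighIter rel k c, cumInNeigh rel d

/-- The in-reachability set `R⁻(c)`: the set of cells `d` from which there is a
(possibly empty) directed path to `c`. -/
def inReach {C : Type*} (rel : C → C → Prop) (c : C) : Set C :=
  {d | Relation.ReflTransGen rel d c}

/-- A partition `A` on `C` is `U`-matched (for `U` assigning to each cell a subset of
`C`) if cells of the same color see the same set of colors in their `U`-sets:
`A(c) = A(d)` implies `A(U(c)) = A(U(d))`, where a set of cells is sent to its image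
under the quotient (coloring) map of `A`. -/
def Matched {C : Type*} (A : Setoid C) (U : C → Set C) : Prop :=
  ∀ c d, A c d → Quotient.mk A '' U c = Quotient.mk A '' U d


lemma aux_union_image_eq {C : Type*} (rel : C → C → Prop) (A : Setoid C)
    (h : Matched A (cumInNeigh rel)) {S T : Set C}
    (hST : Quotient.mk A '' S = Quotient.mk A '' T) :
    Quotient.mk A '' (⋃ e ∈ S, cumInNeigh rel e) =
      Quotient.mk A '' (⋃ e ∈ T, cumInNeigh rel e) := by
  have main : ∀ S T : Set C, Quotient.mk A '' S ⊆ Quotient.mk A '' T →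
      Quotient.mk A '' (⋃ e ∈ S, cumInNeigh rel e) ⊆
        Quotient.mk A '' (⋃ e ∈ T, cumInNeigh rel e) := by
    intro S T hST x hx
    simp only [Set.image_iUnion₂, Set.mem_iUnion] at hx ⊢
    obtain ⟨e, heS, hx⟩ := hx
    obtain ⟨e', he'T, he'⟩ := hST ⟨e, heS, rfl⟩
    exact ⟨e', he'T, by rwa [h e' e (Quotient.exact he')]⟩
  exact subset_antisymm (main S T hST.le) (main T S hST.ge)

lemma aux_matched_iter {C : Type*} (rel : C → C → Prop) (A : Setoid C)
    (h : Matched A (cumInNeigh rel)) : ∀ k, Matched A (cumInNeighIter rel k) := by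
  intro k
  induction k with
  | zero =>
    intro c d hcd
    simp [cumInNeighIter, Set.image_singleton, Quotient.sound hcd]
  | succ k ih =>
    intro c d hcd
    show Quotient.mk A '' (⋃ e ∈ cumInNeighIter rel k c, cumInNeigh rel e) = _
    exact aux_union_image_eq rel A h (ih c d hcd)

lemma aux_inReach_eq_iUnion {C : Type*} (rel : C → C → Prop) (c : C) :
    inReach rel c = ⋃ k, cumInNeighIter rel k c := by
  ext d
  simp only [inReach, Set.mem_setOf_eq, Set.mem_iUnion]
  constructor
  · intro hd
    induction hd using Relation.ReflTransGen.head_induction_on with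
    | refl => exact ⟨0, rfl⟩
    | head hrel _ ih =>
      obtain ⟨k, hk⟩ := ih
      exact ⟨k + 1, Set.mem_biUnion hk (Set.mem_insert_iff.mpr (Or.inr hrel))⟩
  · rintro ⟨k, hk⟩
    induction k generalizing d with
    | zero =>
      rw [show cumInNeighIter rel 0 c = {c} from rfl, Set.mem_singleton_iff] at hk
      subst hk; exact .refl
    | succ k ih =>
      obtain ⟨e, he, hde⟩ := Set.mem_iUnion₂.mp hk
      rcases Set.mem_insert_iff.mp hde with rfl | hrel
      · exact ih _ he
      · exact .head hrel (ih _ he)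

/-- On a finite directed graph, if a partition `A` on the cell set
`C` is `V⁻`-matched then it is `V⁻_k`-matched for every `k ≥ 1`, and consequently `A`
is `R⁻`-matched. -/
theorem matched_iter_and_inReach_of_matched_cumInNeigh {C : Type*} [Fintype C]
    (rel : C → C → Prop) (A : Setoid C)
    (h : Matched A (cumInNeigh rel)) :
    (∀ k : ℕ, 1 ≤ k → Matched A (cumInNeighIter rel k)) ∧ Matched A (inReach rel) := by
  refine ⟨fun k _ => aux_matched_iter rel A h k, fun c d hcd => ?_⟩
  rw [aux_inReach_eq_iUnion, aux_inReach_eq_iUnion, Set.image_iUnion, Set.image_iUnion]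
  exact Set.iUnion_congr fun k => aux_matched_iter rel A h k c d hcd
end

section
/- On a finite directed graph, if a partition A on the cell set C is non-weak and R⁻-matched, then A is finer than the partition of root dependency components: whenever A(c) = A(d), the sets R⁻(c) and R⁻(d) contain exactly the same root cells. -/
/-- A partition `A` is *non-weak* if for every color the intersection of the
in-reachability sets of its cells is nonempty. -/
def NonWeak {C : Type*} (rel : C → C → Prop) (A : Setoid C) : Prop :=
  ∀ c : C, (⋂ d ∈ {d | A c d}, inReach rel d).Nonempty

/-- A cell `r` is a *root cell* if `r ∈ R⁻(e)` for every `e ∈ R⁻(r)`, i.e. its strongly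
connected component is a root (no directed path into it from another SCC). -/
def IsRootCell {C : Type*} (rel : C → C → Prop) (r : C) : Prop :=
  ∀ e ∈ inReach rel r, r ∈ inReach rel e

/-- On a finite directed graph, if a partition `A` on the cell set
`C` is non-weak and `R⁻`-matched, then `A` is finer than the partition of root
dependency components: whenever `A(c) = A(d)`, the sets `R⁻(c)` and `R⁻(d)` contain
exactly the same root cells. -/
theorem nonweak_matched_finer_than_rdc {C : Type*} [Fintype C]
    (rel : C → C → Prop) (A : Setoid C)
    (hnw : NonWeak rel A) (hm : Matched A (inReach rel)) :
    ∀ c d, A c d → ∀ r, IsRootCell rel r → (r ∈ inReach rel c ↔ r ∈ inReach rel d) := by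
  have key : ∀ c d, A c d → ∀ r, IsRootCell rel r → r ∈ inReach rel c → r ∈ inReach rel d := by
    intro c d hcd r hr hrc
    have him := hm c d hcd
    have : (⟦r⟧ : Quotient A) ∈ Quotient.mk A '' inReach rel d := by
      rw [← him]; exact ⟨r, hrc, rfl⟩
    obtain ⟨r', hr'd, hq⟩ := this
    have hrr' : A r r' := Quotient.exact hq.symm
    obtain ⟨x, hx⟩ := hnw r
    simp only [Set.mem_iInter] at hx
    have hxr : x ∈ inReach rel r := hx r (A.refl r)
    have hxr' : x ∈ inReach rel r' := hx r' hrr'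
    have hrx : r ∈ inReach rel x := hr x hxr
    exact Relation.ReflTransGen.trans (Relation.ReflTransGen.trans hrx hxr') hr'd
  intro c d hcd r hr
  exact ⟨key c d hcd r hr, key d c (A.symm hcd) r hr⟩
end

section
/- On a finite directed graph, let A1 and A2 be partitions on the cell set C that are both non-weak and R⁻-matched. Then their join A1 ∨ A2 is non-weak. -/
/-- There is a "maximal" cell `μ` reaching `c`: any cell reaching `μ` is reached
back from `μ`. -/
lemma exists_maximal_reaching {C : Type*} [Fintype C] (rel : C → C → Prop) (c : C) :
    ∃ μ, Relation.ReflTransGen rel μ c ∧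
      ∀ u, Relation.ReflTransGen rel u μ → Relation.ReflTransGen rel μ u := by
  classical
  have hfin : (inReach rel c).Finite := Set.toFinite _
  have hne : (inReach rel c).Nonempty := ⟨c, Relation.ReflTransGen.refl⟩
  obtain ⟨μ, hμc, hmin⟩ := Set.exists_min_image (inReach rel c)
    (fun d => (inReach rel d).ncard) hfin hne
  refine ⟨μ, hμc, fun u hu => ?_⟩
  have hsub : inReach rel u ⊆ inReach rel μ := fun v hv => hv.trans hu
  have huc : u ∈ inReach rel c := Relation.ReflTransGen.trans hu hμc
  have heq : inReach rel u = inReach rel μ :=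
    Set.eq_of_subset_of_ncard_le hsub (hmin u huc) (Set.toFinite _)
  have : μ ∈ inReach rel u := by
    rw [heq]; exact Relation.ReflTransGen.refl
  exact this

/-- A maximal cell reaches every cell in its class, for a non-weak partition. -/
lemma maximal_reaches_class {C : Type*} (rel : C → C → Prop) (A : Setoid C)
    (hnw : NonWeak rel A) {μ z : C}
    (hmax : ∀ u, Relation.ReflTransGen rel u μ → Relation.ReflTransGen rel μ u)
    (hz : A μ z) : Relation.ReflTransGen rel μ z := by
  obtain ⟨w, hw⟩ := hnw μ
  have hwz : w ∈ inReach rel z := by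
    have := Set.mem_iInter₂.1 hw z hz
    exact this
  have hwμ : w ∈ inReach rel μ := Set.mem_iInter₂.1 hw μ (A.refl μ)
  exact (hmax w hwμ).trans hwz

lemma matched_step {C : Type*} (rel : C → C → Prop) (A : Setoid C)
    (hnw : NonWeak rel A) (hm : Matched A (inReach rel)) {μ x y : C}
    (hmax : ∀ u, Relation.ReflTransGen rel u μ → Relation.ReflTransGen rel μ u)
    (hxy : A x y) (hμx : Relation.ReflTransGen rel μ x) :
    Relation.ReflTransGen rel μ y := by
  have himg := hm x y hxy
  have hmem : Quotient.mk A μ ∈ Quotient.mk A '' inReach rel x := ⟨μ, hμx, rfl⟩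
  rw [himg] at hmem
  obtain ⟨z, hzy, hz⟩ := hmem
  have hAz : A μ z := A.symm (Quotient.eq.1 hz)
  exact (maximal_reaches_class rel A hnw hmax hAz).trans hzy

/-- On a finite directed graph, let `A1` and `A2` be partitions on
the cell set `C` that are both non-weak and `R⁻`-matched.  Then their join `A1 ⊔ A2`
(the finest partition coarser than both) is non-weak. -/
theorem nonweak_join {C : Type*} [Fintype C]
    (rel : C → C → Prop) (A1 A2 : Setoid C)
    (h1nw : NonWeak rel A1) (h1m : Matched A1 (inReach rel))
    (h2nw : NonWeak rel A2) (h2m : Matched A2 (inReach rel)) :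
    NonWeak rel (A1 ⊔ A2) := by
  intro c
  obtain ⟨μ, hμc, hmax⟩ := exists_maximal_reaching rel c
  refine ⟨μ, Set.mem_iInter₂.2 fun d hd => ?_⟩
  have hd' : (A1 ⊔ A2) c d := hd
  rw [Setoid.sup_eq_eqvGen] at hd'
  have key : ∀ x y, Relation.EqvGen (fun a b => A1 a b ∨ A2 a b) x y →
      (Relation.ReflTransGen rel μ x ↔ Relation.ReflTransGen rel μ y) := by
    intro x y h
    induction h with
    | rel a b hab =>
      rcases hab with h | h
      · exact ⟨matched_step rel A1 h1nw h1m hmax h,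
          matched_step rel A1 h1nw h1m hmax (A1.symm h)⟩
      · exact ⟨matched_step rel A2 h2nw h2m hmax h,
          matched_step rel A2 h2nw h2m hmax (A2.symm h)⟩
    | refl a => exact Iff.rfl
    | symm a b _ ih => exact ih.symm
    | trans a b c _ _ ih1 ih2 => exact ih1.trans ih2
  exact (key c d hd').1 hμc
end
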